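/- Let m, v ≥ 2 be integers. The multinomial coefficient (mv)! / (m!)^v, which counts balanced columns of length mv over a v-letter alphabet, equals the product C(mv, m) · C(m(v-1), m) · ⋯ · C(2m, m), and hence is strictly greater than (∏_{i=2}^{v} l(i)) · m^(-(v-1)/2) · v^(vm), where l(i) = (e^(15/16)/√(2π)) · ((i-1)/i)^(i-1). -/

import Mathlib

open Real Finset

/-- The constant `l(i)` in the lower bound on the central-type binomial coefficient. -/
noncomputable def lConst (i : ℕ) : ℝ :=
  Real.exp (15/16) / Real.sqrt (2 * π) * (((i : ℝ) - 1) / (i : ℝ)) ^ (i - 1)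

/-!
Splitting the mv positions into v blocks of m, chosen one block at a time, gives
(mv)! = C(mv, m) C(m(v-1), m) ⋯ C(2m, m) (m!)^v.

For the bound, the product of the l(i) telescopes to b^(v-1) v!/v^v with b = e^(15/16)/√(2π).
Stirling's sequence s(n) = n!/(√(2n)(n/e)^n) decreases to √π, so √π ≤ s(n) ≤ s(2) = e²/4 =: c
for n ≥ 2. The lower bound for (mv)! and the upper bounds for m! and v! reduce the claim to
b^(v-1) c (c√2)^v < √π e^v. The left side is (bc√2)^(v-2) times its value at v = 2, and
bc√2 ≤ e, so only the case v = 2 remains; both facts are numerical estimates of e and π.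
-/

open Nat Stirling

theorem factorial_mul_eq_prod_choose_mul_pow (m v : ℕ) :
    (m * v)! = (∏ i ∈ Icc 2 v, (m * i).choose m) * m ! ^ v := by
  induction v with
  | zero => simp
  | succ v ih =>
    rcases Nat.eq_zero_or_pos v with rfl | hv
    · simp
    rw [prod_Icc_succ_top (by omega), pow_succ, mul_add_one,
      ← Nat.add_choose_mul_factorial_mul_factorial, ih]
    ring

theorem prod_Icc_sub_one_div_pow (v : ℕ) :
    ∏ i ∈ Icc 2 v, (((i : ℝ) - 1) / i) ^ (i - 1) = v ! / (v : ℝ) ^ v := by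
  induction v with
  | zero => simp
  | succ v ih =>
    rcases Nat.eq_zero_or_pos v with rfl | hv
    · simp
    rw [prod_Icc_succ_top (by omega), ih, Nat.factorial_succ, add_tsub_cancel_right]
    push_cast
    rw [add_sub_cancel_right, div_pow]
    field_simp
    ring

theorem prod_lConst (v : ℕ) :
    ∏ i ∈ Icc 2 v, lConst i =
      (exp (15/16) / √(2 * π)) ^ (v - 1) * (v ! / (v : ℝ) ^ v) := by
  rw [← prod_Icc_sub_one_div_pow]
  simp only [lConst, prod_mul_distrib, prod_const, Nat.card_Icc]
  congr 2

theorem Stirling.factorial_le_stirlingSeq_mul {k n : ℕ} (hk : k ≠ 0) (hkn : k ≤ n) :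
    (n ! : ℝ) ≤ stirlingSeq k * (√(2 * n) * (n / exp 1) ^ n) := by
  have hn : n ≠ 0 := by omega
  have : stirlingSeq n ≤ stirlingSeq k := by
    obtain ⟨k, rfl⟩ := Nat.exists_eq_succ_of_ne_zero hk
    obtain ⟨n, rfl⟩ := Nat.exists_eq_succ_of_ne_zero hn
    exact stirlingSeq'_antitone (Nat.succ_le_succ_iff.mp hkn)
  rwa [stirlingSeq, div_le_iff₀ (by positivity)] at this

theorem Stirling.stirlingSeq_two : stirlingSeq 2 = exp 1 ^ 2 / 4 := by
  have : √(2 * 2 : ℝ) = 2 := by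
    rw [show (2 * 2 : ℝ) = 2 ^ 2 by norm_num, sqrt_sq zero_le_two]
  simp only [stirlingSeq, Nat.factorial_two]
  push_cast
  rw [this]
  field_simp
  norm_num

theorem rpow_neg_sub_one_div_two {x : ℝ} (hx : 0 < x) (v : ℕ) :
    x ^ (-((v : ℝ) - 1) / 2) = √x / √x ^ v := by
  rw [sqrt_eq_rpow, ← rpow_natCast, ← rpow_mul hx.le, ← rpow_sub hx]
  ring_nf

theorem factorial_div_pow_self_le {n : ℕ} (hn : 2 ≤ n) :
    (n ! : ℝ) / n ^ n ≤ stirlingSeq 2 / exp 1 ^ n * √(2 * n) := by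
  calc (n ! : ℝ) / n ^ n ≤ stirlingSeq 2 * (√(2 * n) * (n / exp 1) ^ n) / n ^ n := by
        gcongr; exact factorial_le_stirlingSeq_mul two_ne_zero hn
    _ = _ := by rw [div_pow]; field_simp

theorem le_factorial_mul_div_factorial_pow {m : ℕ} (hm : 2 ≤ m) (v : ℕ) :
    √π / (stirlingSeq 2 * √2) ^ v *
        (√(2 * v) * ((m : ℝ) ^ (-((v : ℝ) - 1) / 2) * (v : ℝ) ^ (v * m)))
      ≤ ((m * v)! : ℝ) / (m ! : ℝ) ^ v := by
  have hm0 : (0 : ℝ) < m := by positivity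
  calc _ = √(2 * π * (m * v : ℕ)) * ((m * v : ℕ) / exp 1) ^ (m * v)
        / (stirlingSeq 2 * (√(2 * m) * (m / exp 1) ^ m)) ^ v := by
          rw [rpow_neg_sub_one_div_two hm0]
          push_cast
          simp (disch := positivity) only [sqrt_mul', mul_div_right_comm _ (v : ℝ), mul_pow,
            ← pow_mul, mul_comm v m]
          field_simp
    _ ≤ _ := div_le_div₀ (by positivity) (le_factorial_stirling _) (by positivity)
          (pow_le_pow_left₀ (by positivity) (factorial_le_stirlingSeq_mul two_ne_zero hm) v)

theorem exp_sub_one_sixteenth_le (x : ℝ) : exp (x - 1/16) ≤ 16/17 * exp x := by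
  have := add_one_le_exp (1/16 : ℝ)
  rw [exp_sub, div_le_iff₀ (exp_pos _)]
  nlinarith [exp_pos x]

theorem exp_thirtyOne_sixteenths_le : exp (31/16) ≤ 4 * √π := by
  have hπ : (1.772 : ℝ) ≤ √π := le_sqrt_of_sq_le (by linarith [pi_gt_d2])
  have he : exp 2 < 2.7182818286 ^ 2 := by
    rw [show (2 : ℝ) = (2 : ℕ) by norm_num, ← exp_one_pow]; gcongr; exact exp_one_lt_d9
  calc exp (31/16) = exp (2 - 1/16) := by norm_num
    _ ≤ 16/17 * exp 2 := exp_sub_one_sixteenth_le 2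
    _ ≤ _ := by linarith

theorem exp_seventyNine_sixteenths_lt : exp (79/16) < 32 * √2 * π := by
  have h2 : (1.414 : ℝ) ≤ √2 := le_sqrt_of_sq_le (by norm_num)
  have he : exp 5 < 2.7182818286 ^ 5 := by
    rw [show (5 : ℝ) = (5 : ℕ) by norm_num, ← exp_one_pow]; gcongr; exact exp_one_lt_d9
  calc exp (79/16) = exp (5 - 1/16) := by norm_num
    _ ≤ 16/17 * exp 5 := exp_sub_one_sixteenth_le 5
    _ < 32 * 1.414 * 3.14 := by linarith
    _ ≤ _ := by gcongr; linarith [pi_gt_d2]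

theorem exp_div_sqrt_mul_stirlingSeq_two_mul_sqrt_two_le :
    exp (15/16) / √(2 * π) * stirlingSeq 2 * √2 ≤ exp 1 :=
  calc _ = exp (31/16) / (4 * √π) * exp 1 := by
        rw [stirlingSeq_two, sqrt_mul zero_le_two, show (31/16 : ℝ) = 15/16 + 1 by norm_num,
          exp_add]
        field_simp
    _ ≤ 1 * exp 1 := by
        gcongr
        rw [div_le_one (by positivity)]
        exact exp_thirtyOne_sixteenths_le
    _ = exp 1 := one_mul _

theorem two_mul_exp_div_sqrt_mul_stirlingSeq_two_pow_three_lt :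
    2 * (exp (15/16) / √(2 * π)) * stirlingSeq 2 ^ 3 < √π * exp 1 ^ 2 :=
  calc _ = exp (79/16) / (32 * √2 * π) * (√π * exp 1 ^ 2) := by
        rw [stirlingSeq_two, sqrt_mul zero_le_two,
          show (79/16 : ℝ) = 15/16 + 1 + 1 + 1 + 1 by norm_num,
          exp_add, exp_add, exp_add, exp_add]
        field_simp
        rw [sq_sqrt pi_pos.le]
        ring
    _ < 1 * (√π * exp 1 ^ 2) := by
        gcongr
        rw [div_lt_one (by positivity)]
        exact exp_seventyNine_sixteenths_lt
    _ = √π * exp 1 ^ 2 := one_mul _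

theorem stirling_constants_lt {v : ℕ} (hv : 2 ≤ v) :
    (exp (15/16) / √(2 * π)) ^ (v - 1) * (stirlingSeq 2 / exp 1 ^ v)
      < √π / (stirlingSeq 2 * √2) ^ v := by
  have hc : 0 < stirlingSeq 2 := by rw [stirlingSeq_two]; positivity
  have hratio := exp_div_sqrt_mul_stirlingSeq_two_mul_sqrt_two_le
  have hbase := two_mul_exp_div_sqrt_mul_stirlingSeq_two_pow_three_lt
  obtain ⟨n, rfl⟩ := Nat.exists_eq_add_of_le' hv
  set b := exp (15/16) / √(2 * π)
  set c := stirlingSeq 2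
  rw [lt_div_iff₀ (by positivity)]
  calc b ^ (n + 2 - 1) * (c / exp 1 ^ (n + 2)) * (c * √2) ^ (n + 2)
      = (b * c * √2) ^ n * (2 * b * c ^ 3) / exp 1 ^ (n + 2) := by
        rw [Nat.add_sub_assoc one_le_two, mul_pow, pow_add √2, sq_sqrt zero_le_two]
        ring
    _ < exp 1 ^ n * (√π * exp 1 ^ 2) / exp 1 ^ (n + 2) := by
        gcongr ?_ / _
        exact mul_lt_mul' (pow_le_pow_left₀ (by positivity) hratio n) hbase
          (by positivity) (by positivity)
    _ = √π := by field_simp; ring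

theorem multinomial_balanced_columns (m v : ℕ) (hm : 2 ≤ m) (hv : 2 ≤ v) :
    ((m * v).factorial : ℝ) / ((m.factorial : ℝ)) ^ v =
      ∏ i ∈ Finset.Icc 2 v, ((m * i).choose m : ℝ) ∧
    (∏ i ∈ Finset.Icc 2 v, lConst i) * (m : ℝ) ^ (-((v : ℝ) - 1) / 2) * (v : ℝ) ^ (v * m) <
      ((m * v).factorial : ℝ) / ((m.factorial : ℝ)) ^ v := by
  have hprod : ((m * v)! : ℝ) = (∏ i ∈ Icc 2 v, ((m * i).choose m : ℝ)) * m ! ^ v := by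
    exact_mod_cast factorial_mul_eq_prod_choose_mul_pow m v
  refine ⟨by rw [hprod, mul_div_cancel_right₀ _ (by positivity)], ?_⟩
  set X := (m : ℝ) ^ (-((v : ℝ) - 1) / 2) * (v : ℝ) ^ (v * m)
  calc (∏ i ∈ Icc 2 v, lConst i) * (m : ℝ) ^ (-((v : ℝ) - 1) / 2) * (v : ℝ) ^ (v * m)
      = (exp (15/16) / √(2 * π)) ^ (v - 1) * (v ! / (v : ℝ) ^ v) * X := by
        rw [prod_lConst, mul_assoc]
    _ ≤ (exp (15/16) / √(2 * π)) ^ (v - 1) * (stirlingSeq 2 / exp 1 ^ v * √(2 * v)) * X := by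
        gcongr
        exact factorial_div_pow_self_le hv
    _ = (exp (15/16) / √(2 * π)) ^ (v - 1) * (stirlingSeq 2 / exp 1 ^ v) *
          (√(2 * v) * X) := by
        ring
    _ < √π / (stirlingSeq 2 * √2) ^ v * (√(2 * v) * X) := by
        gcongr
        exact stirling_constants_lt hv
    _ ≤ _ := le_factorial_mul_div_factorial_pow hm v
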